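/- Let L be an invertible lower-triangular N×N matrix with the semiseparable structure L_{t',t} = Q_t^{1/2} f_{t'} M_{t'} ⋯ M_{t+1} k_t for t' > t and L_{t,t} = Q_t^{1/2}. Then Lᵀ u can be computed by the backward recursion: g_N = 0 (row vector in ℝ^{1×q}), and for t = N, N−1, …, 1: x̃_t = Q_t^{1/2}(g_t k_t + u_t), g_{t−1} = g_t M_t + u_t f_t M_t (with M_t applied on the right), where g_t k_t for t = N is interpreted as 0; then x̃ = Lᵀ u. -/
import Mathlib


open Matrix

/-- Product `M_s M_{s-1} ⋯ M_{t+1}` of transition matrices (empty product = 1). -/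
noncomputable def transProd {q : ℕ} (M : ℕ → Matrix (Fin q) (Fin q) ℝ) (t s : ℕ) :
    Matrix (Fin q) (Fin q) ℝ :=
  ((List.range (s - t)).map (fun i => M (s - i))).prod

/-- Backward accumulation of row vectors for the transposed semiseparable product:
`bwdG … k = g_{T-k}` where `T = N-1` is the last (0-based) index, `g_T = 0` and
`g_{t-1} = g_t M_t + u_t f_t M_t`. -/
noncomputable def bwdG {q : ℕ} (f : ℕ → Fin q → ℝ) (M : ℕ → Matrix (Fin q) (Fin q) ℝ)
    (u : ℕ → ℝ) (T : ℕ) : ℕ → Fin q → ℝ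
  | 0 => 0
  | j + 1 => Matrix.vecMul (bwdG f M u T j + u (T - j) • f (T - j)) (M (T - j))

lemma sum_dotProduct' {q : ℕ} {ι : Type*} (s : Finset ι) (v : ι → Fin q → ℝ)
    (w : Fin q → ℝ) : (∑ i ∈ s, v i) ⬝ᵥ w = ∑ i ∈ s, v i ⬝ᵥ w := by
  simp only [dotProduct, Finset.sum_apply, Finset.sum_mul]
  exact Finset.sum_comm

lemma sum_vecMul' {q : ℕ} {ι : Type*} (s : Finset ι) (v : ι → Fin q → ℝ)
    (A : Matrix (Fin q) (Fin q) ℝ) : (∑ i ∈ s, v i) ᵥ* A = ∑ i ∈ s, v i ᵥ* A := by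
  funext j
  simp only [vecMul, dotProduct, Finset.sum_apply, Finset.sum_mul]
  exact Finset.sum_comm

lemma transProd_pred {q : ℕ} (M : ℕ → Matrix (Fin q) (Fin q) ℝ) {t s : ℕ}
    (ht : 1 ≤ t) (hts : t ≤ s) :
    transProd M (t - 1) s = transProd M t s * M t := by
  unfold transProd
  have h1 : s - (t - 1) = (s - t) + 1 := by omega
  rw [h1, List.range_succ, List.map_append, List.prod_append]
  have h2 : s - (s - t) = t := by omega
  simp [h2]

lemma transProd_one {q : ℕ} (M : ℕ → Matrix (Fin q) (Fin q) ℝ) {t s : ℕ}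
    (h : s - t = 1) : transProd M t s = M s := by
  unfold transProd
  rw [h]
  show (List.map (fun i => M (s - i)) (List.range (0+1))).prod = M s
  rw [List.range_succ]
  simp

lemma bwdG_eq {q : ℕ} (f : ℕ → Fin q → ℝ) (M : ℕ → Matrix (Fin q) (Fin q) ℝ)
    (u : ℕ → ℝ) (T : ℕ) : ∀ j, j ≤ T →
    bwdG f M u T j =
      ∑ s ∈ Finset.range j, u (T - s) • ((f (T - s)) ᵥ* (transProd M (T - j) (T - s))) := by
  intro j
  induction j with
  | zero => intro _; simp [bwdG]
  | succ j ih =>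
    intro hj
    have hj' : j ≤ T := by omega
    rw [bwdG, ih hj', Finset.sum_range_succ, Matrix.add_vecMul, sum_vecMul']
    congr 1
    · apply Finset.sum_congr rfl
      intro s hs
      have hs' : s < j := Finset.mem_range.mp hs
      rw [Matrix.smul_vecMul, Matrix.vecMul_vecMul]
      have h1 : 1 ≤ T - j := by omega
      have h2 : T - j ≤ T - s := by omega
      have h3 : T - (j + 1) = (T - j) - 1 := by omega
      rw [h3, transProd_pred M h1 h2]
    · rw [Matrix.smul_vecMul]
      have h1 : (T - j) - (T - (j + 1)) = 1 := by omega
      rw [transProd_one M h1]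

/-- Transposed semiseparable matrix-vector product: if `L` is an invertible
lower-triangular matrix with `L_{t',t} = Q_t^{1/2} f_{t'} M_{t'} ⋯ M_{t+1} k_t` for `t' > t`
and `L_{t,t} = Q_t^{1/2}` (`Q_t > 0`), then `Lᵀ u` is computed by the backward recursion:
with `g` the backward accumulation (`g` at the last index is `0`, so the `g k` term there
is `0`), `x̃_t = Q_t^{1/2} (g_t ⬝ k_t + u_t)` satisfies `x̃ = Lᵀ u`. -/
theorem semiseparable_transpose_mulVec {N q : ℕ} (hN : 0 < N)
    (f : ℕ → Fin q → ℝ) (M : ℕ → Matrix (Fin q) (Fin q) ℝ)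
    (k : ℕ → Fin q → ℝ) (Q : ℕ → ℝ) (hQ : ∀ t, 0 < Q t)
    (L : Matrix (Fin N) (Fin N) ℝ)
    (hLinv : IsUnit L.det)
    (hLlow : ∀ t' t : Fin N, (t' : ℕ) < (t : ℕ) → L t' t = 0)
    (hLdiag : ∀ t : Fin N, L t t = Real.sqrt (Q t))
    (hLoff : ∀ t' t : Fin N, (t : ℕ) < (t' : ℕ) →
      L t' t = Real.sqrt (Q t) * (f t' ⬝ᵥ (transProd M t t' *ᵥ k t)))
    (u : ℕ → ℝ) :
    ∀ t : Fin N, (L.transpose *ᵥ fun i : Fin N => u i) t =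
      Real.sqrt (Q t) * (bwdG f M u (N - 1) (N - 1 - t) ⬝ᵥ k t + u t) := by
  intro t
  set T := N - 1 with hT
  have htT : (t : ℕ) ≤ T := by omega
  -- Rewrite RHS using bwdG_eq
  have hsub : T - (T - (t : ℕ)) = t := by omega
  rw [bwdG_eq f M u T (T - t) (by omega), hsub, sum_dotProduct']
  -- LHS as a sum
  have hlhs : (L.transpose *ᵥ fun i : Fin N => u i) t = ∑ t' : Fin N, L t' t * u t' := by
    simp [Matrix.mulVec, dotProduct, Matrix.transpose_apply]
  rw [hlhs]
  have hsplit : (Finset.univ : Finset (Fin N)) = Finset.Iic t ∪ Finset.Ioi t := by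
    ext a; simp [le_or_gt]
  rw [hsplit, Finset.sum_union (by
    simp only [Finset.disjoint_left, Finset.mem_Iic, Finset.mem_Ioi]
    intro a h1 h2; exact absurd h2 (not_lt.mpr h1))]
  have hIic : ∑ t' ∈ Finset.Iic t, L t' t * u t' = Real.sqrt (Q t) * u t := by
    rw [← Finset.Iio_insert, Finset.sum_insert (by simp)]
    rw [hLdiag t]
    have : ∑ t' ∈ Finset.Iio t, L t' t * u t' = 0 := by
      apply Finset.sum_eq_zero
      intro t' ht'
      rw [hLlow t' t (by simpa using ht')]
      ring
    rw [this]; ring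
  rw [hIic]
  have hNT : T < N := by omega
  have hIoi : ∑ t' ∈ Finset.Ioi t, L t' t * u t' =
      ∑ s ∈ Finset.range (T - t),
        Real.sqrt (Q t) * (u (T - s) * ((f (T - s)) ᵥ* (transProd M t (T - s)) ⬝ᵥ k t)) := by
    apply Finset.sum_nbij' (fun (t' : Fin N) => T - (t' : ℕ))
      (fun (s : ℕ) => (⟨T - s, by omega⟩ : Fin N))
    · intro t' ht'
      have h1 : (t : ℕ) < (t' : ℕ) := by simpa using ht'
      have h2 : (t' : ℕ) ≤ T := by omega
      simp only [Finset.mem_range]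
      omega
    · intro s hs
      have hs' : s < T - (t : ℕ) := Finset.mem_range.mp hs
      simp only [Finset.mem_Ioi]
      exact Fin.lt_def.mpr (by simp; omega)
    · intro t' ht'
      have h1 : (t : ℕ) < (t' : ℕ) := by simpa using ht'
      have h2 : (t' : ℕ) ≤ T := by omega
      exact Fin.ext (by simp; omega)
    · intro s hs
      have hs' : s < T - (t : ℕ) := Finset.mem_range.mp hs
      simp only []
      omega
    · intro t' ht'
      have hlt : (t : ℕ) < (t' : ℕ) := by simpa using ht'
      have h2 : (t' : ℕ) ≤ T := by omega
      have hv : T - (T - (t' : ℕ)) = (t' : ℕ) := by omega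
      rw [hLoff t' t hlt, hv, Matrix.dotProduct_mulVec]
      ring
  rw [hIoi, mul_add, Finset.mul_sum, add_comm]
  congr 1
  apply Finset.sum_congr rfl
  intro s _
  rw [smul_dotProduct]
  simp only [smul_eq_mul]
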